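/- Consider a d-layer ReLU network with weights W_i (‖W_i‖ ≤ M) and biases b_i, and let x_i(u) denote the output of layer i on input u. Suppose u, v ∈ ℝ^k satisfy ‖u − v‖ ≤ Lδ where δ < τ/(L·max(M,1)^{d+1}) for some τ, L > 0. Then for every layer i ∈ [d] and every row j with |w_{i,j}ᵀ x_{i−1}(u) + b_{i,j}| ≥ τ, we have sign(w_{i,j}ᵀ x_{i−1}(u) + b_{i,j}) = sign(w_{i,j}ᵀ x_{i−1}(v) + b_{i,j}). -/

import Mathlib

/-!
Each layer `x ↦ σ(W x + b)` is `‖W‖`-Lipschitz for the Euclidean norm, because the ReLU is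
1-Lipschitz in every coordinate. Hence the pre-activations of layer `i + 1` at `u` and `v` differ by
at most `max(M,1)^(i+1) ‖u - v‖ ≤ max(M,1)^(d+1) L δ < τ` in every coordinate, and a number at
distance less than `τ` from one of absolute value at least `τ` has the same sign.
-/

noncomputable def opNorm {m n : ℕ} (W : Matrix (Fin m) (Fin n) ℝ) : ℝ :=
  ‖LinearMap.toContinuousLinearMap (Matrix.toEuclideanLin W)‖

/-- Output of the `i`-th layer of a ReLU network on input `x`. -/
noncomputable def layerOut (n : ℕ → ℕ)
    (W : ∀ i, Matrix (Fin (n (i+1))) (Fin (n i)) ℝ)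
    (b : ∀ i, Fin (n (i+1)) → ℝ)
    (x : EuclideanSpace ℝ (Fin (n 0))) : ∀ i, EuclideanSpace ℝ (Fin (n i))
  | 0 => x
  | (i+1) => WithLp.toLp 2 (fun j => max ((W i).mulVec (layerOut n W b x i) j + b i j) 0)

open Matrix

lemma EuclideanSpace.norm_le_norm_of_abs_le {ι : Type*} [Fintype ι] {x y : EuclideanSpace ℝ ι}
    (h : ∀ j, |x j| ≤ |y j|) : ‖x‖ ≤ ‖y‖ := by
  rw [EuclideanSpace.norm_eq, EuclideanSpace.norm_eq]
  gcongr with j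
  simpa only [Real.norm_eq_abs] using h j

lemma norm_toEuclideanLin_le {m k : ℕ} (W : Matrix (Fin m) (Fin k) ℝ)
    (x : EuclideanSpace ℝ (Fin k)) : ‖toEuclideanLin W x‖ ≤ opNorm W * ‖x‖ :=
  (LinearMap.toContinuousLinearMap (toEuclideanLin W)).le_opNorm x

lemma toEuclideanLin_sub_apply {m k : ℕ} (W : Matrix (Fin m) (Fin k) ℝ)
    (x y : EuclideanSpace ℝ (Fin k)) (j : Fin m) :
    toEuclideanLin W (x - y) j = (W *ᵥ x) j - (W *ᵥ y) j := by
  simp [map_sub]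

lemma abs_mulVec_sub_mulVec_le {m k : ℕ} (W : Matrix (Fin m) (Fin k) ℝ)
    (x y : EuclideanSpace ℝ (Fin k)) (j : Fin m) :
    |(W *ᵥ x) j - (W *ᵥ y) j| ≤ opNorm W * ‖x - y‖ := by
  rw [← toEuclideanLin_sub_apply]
  exact (PiLp.norm_apply_le _ j).trans (norm_toEuclideanLin_le W _)

section layers

variable (n : ℕ → ℕ) (W : ∀ i, Matrix (Fin (n (i+1))) (Fin (n i)) ℝ) (b : ∀ i, Fin (n (i+1)) → ℝ)

lemma norm_layerOut_succ_sub_le (u v : EuclideanSpace ℝ (Fin (n 0))) (i : ℕ) :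
    ‖layerOut n W b u (i+1) - layerOut n W b v (i+1)‖
      ≤ opNorm (W i) * ‖layerOut n W b u i - layerOut n W b v i‖ := by
  refine le_trans (EuclideanSpace.norm_le_norm_of_abs_le fun j => ?_) (norm_toEuclideanLin_le _ _)
  rw [toEuclideanLin_sub_apply]
  simpa [layerOut] using abs_max_sub_max_le_abs
    ((W i *ᵥ layerOut n W b u i) j + b i j) ((W i *ᵥ layerOut n W b v i) j + b i j) 0

lemma norm_layerOut_sub_le {d : ℕ} {M : ℝ} (hM : 0 ≤ M) (hW : ∀ i < d, opNorm (W i) ≤ M)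
    (u v : EuclideanSpace ℝ (Fin (n 0))) :
    ∀ i ≤ d, ‖layerOut n W b u i - layerOut n W b v i‖ ≤ M ^ i * ‖u - v‖
  | 0, _ => by simp [layerOut]
  | i + 1, hi => calc
      _ ≤ opNorm (W i) * ‖layerOut n W b u i - layerOut n W b v i‖ :=
        norm_layerOut_succ_sub_le n W b u v i
      _ ≤ M * (M ^ i * ‖u - v‖) :=
        mul_le_mul (hW i (by omega)) (norm_layerOut_sub_le hM hW u v i (by omega)) (norm_nonneg _) hM
      _ = M ^ (i + 1) * ‖u - v‖ := by ring

lemma abs_preactivation_sub_le {d : ℕ} {M : ℝ} (hM : 0 ≤ M) (hW : ∀ i < d, opNorm (W i) ≤ M)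
    (u v : EuclideanSpace ℝ (Fin (n 0))) {i : ℕ} (hi : i < d) (j : Fin (n (i+1))) :
    |((W i *ᵥ layerOut n W b u i) j + b i j) - ((W i *ᵥ layerOut n W b v i) j + b i j)|
      ≤ M ^ (i + 1) * ‖u - v‖ := calc
  _ = |(W i *ᵥ layerOut n W b u i) j - (W i *ᵥ layerOut n W b v i) j| := by
    rw [add_sub_add_right_eq_sub]
  _ ≤ opNorm (W i) * ‖layerOut n W b u i - layerOut n W b v i‖ := abs_mulVec_sub_mulVec_le _ _ _ _
  _ ≤ M * (M ^ i * ‖u - v‖) :=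
    mul_le_mul (hW i hi) (norm_layerOut_sub_le n W b hM hW u v i hi.le) (norm_nonneg _) hM
  _ = M ^ (i + 1) * ‖u - v‖ := by ring

end layers

lemma Real.sign_eq_sign_of_abs_sub_lt {a c τ : ℝ} (ha : τ ≤ |a|) (hac : |a - c| < τ) :
    Real.sign a = Real.sign c := by
  rcases abs_lt.mp hac with ⟨h₁, h₂⟩
  rcases le_abs'.mp ha with ha | ha
  · rw [Real.sign_of_neg (by linarith), Real.sign_of_neg (by linarith)]
  · rw [Real.sign_of_pos (by linarith), Real.sign_of_pos (by linarith)]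

theorem stmt4_general (d : ℕ) (n : ℕ → ℕ)
    (W : ∀ i, Matrix (Fin (n (i+1))) (Fin (n i)) ℝ)
    (b : ∀ i, Fin (n (i+1)) → ℝ) (M L δ τ : ℝ)
    (hW : ∀ i < d, opNorm (W i) ≤ M)
    (hL : 0 < L)
    (hδ : δ < τ / (L * max M 1 ^ (d+1)))
    (u v : EuclideanSpace ℝ (Fin (n 0))) (huv : ‖u - v‖ ≤ L * δ) :
    ∀ i < d, ∀ j, τ ≤ |(W i).mulVec (layerOut n W b u i) j + b i j| →
      Real.sign ((W i).mulVec (layerOut n W b u i) j + b i j)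
        = Real.sign ((W i).mulVec (layerOut n W b v i) j + b i j) := by
  intro i hi j hτj
  refine Real.sign_eq_sign_of_abs_sub_lt hτj ?_
  have hM₁ : 1 ≤ max M 1 := le_max_right M 1
  have hW' : ∀ i < d, opNorm (W i) ≤ max M 1 := fun i hi => (hW i hi).trans (le_max_left M 1)
  have hLδ : max M 1 ^ (d + 1) * (L * δ) < τ := by
    rw [lt_div_iff₀ (by positivity)] at hδ
    linarith
  calc _ ≤ max M 1 ^ (i + 1) * ‖u - v‖ :=
        abs_preactivation_sub_le n W b (by linarith) hW' u v hi j
    _ ≤ max M 1 ^ (d + 1) * (L * δ) :=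
        mul_le_mul (pow_le_pow_right₀ hM₁ (by omega)) huv (norm_nonneg _) (by positivity)
    _ < τ := hLδ

theorem stmt4 (d : ℕ) (n : ℕ → ℕ)
    (W : ∀ i, Matrix (Fin (n (i+1))) (Fin (n i)) ℝ)
    (b : ∀ i, Fin (n (i+1)) → ℝ) (M L δ τ : ℝ)
    (hW : ∀ i < d, opNorm (W i) ≤ M)
    (hL : 0 < L) (hτ : 0 < τ)
    (hδ : δ < τ / (L * max M 1 ^ (d+1)))
    (u v : EuclideanSpace ℝ (Fin (n 0))) (huv : ‖u - v‖ ≤ L * δ) :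
    ∀ i < d, ∀ j, τ ≤ |(W i).mulVec (layerOut n W b u i) j + b i j| →
      Real.sign ((W i).mulVec (layerOut n W b u i) j + b i j)
        = Real.sign ((W i).mulVec (layerOut n W b v i) j + b i j) :=
  stmt4_general d n W b M L δ τ hW hL hδ u v huv
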